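/- arXiv:2101.07065 — 5 statements merged into one kernel-verified Lean document; each statement's English description precedes it below -/
import Mathlib

section
/- Let n, r, s be natural numbers with n ≥ 1, r ≥ 1 and s ≥ n. Then for every r-tuple (m_1, …, m_r) of natural numbers with each m_i ≤ n and m_1 + ⋯ + m_r = s, one has m_1!·m_2!⋯m_r! ≤ n!·n^{s−n}. -/
lemma asc_mono (k : ℕ) : ∀ {a b : ℕ}, a ≤ b →
    Nat.ascFactorial a k ≤ Nat.ascFactorial b k := by
  induction k with
  | zero => intro a b h; simp [Nat.ascFactorial_zero]
  | succ k ih =>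
    intro a b h
    rw [Nat.ascFactorial_succ, Nat.ascFactorial_succ]
    exact Nat.mul_le_mul (by omega) (ih h)

lemma fact_le_pow {m n : ℕ} (h : m ≤ n) : Nat.factorial m ≤ n ^ m := by
  induction m with
  | zero => simp [Nat.factorial]
  | succ m ih =>
    rw [Nat.factorial_succ, pow_succ, mul_comm (n ^ m) n]
    exact Nat.mul_le_mul h (ih (by omega))

lemma merge_fact {a b n : ℕ} (ha : a ≤ n) (hb : b ≤ n) (h : n ≤ a + b) :
    Nat.factorial a * Nat.factorial b ≤ Nat.factorial n * Nat.factorial (a + b - n) := by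
  set c := a + b - n with hc
  set k := n - a with hk
  have hck : c + k = b := by omega
  have hak : a + k = n := by omega
  have h1 : Nat.factorial c * Nat.ascFactorial (c + 1) k = Nat.factorial b := by
    rw [Nat.factorial_mul_ascFactorial, hck]
  have h2 : Nat.factorial a * Nat.ascFactorial (a + 1) k = Nat.factorial n := by
    rw [Nat.factorial_mul_ascFactorial, hak]
  calc Nat.factorial a * Nat.factorial b
      = Nat.factorial a * (Nat.factorial c * Nat.ascFactorial (c + 1) k) := by rw [h1]
    _ ≤ Nat.factorial a * (Nat.factorial c * Nat.ascFactorial (a + 1) k) := by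
        exact Nat.mul_le_mul_left _ (Nat.mul_le_mul_left _ (asc_mono k (by omega)))
    _ = Nat.factorial a * Nat.ascFactorial (a + 1) k * Nat.factorial c := by ring
    _ = Nat.factorial n * Nat.factorial c := by rw [h2]

lemma aux (n : ℕ) (hn : 1 ≤ n) : ∀ r s : ℕ, n ≤ s → ∀ m : Fin r → ℕ,
    (∀ i, m i ≤ n) → (∑ i, m i = s) →
    ∏ i, Nat.factorial (m i) ≤ Nat.factorial n * n ^ (s - n) := by
  intro r
  induction r with
  | zero => intro s hs m _ hsum; simp at hsum; omega
  | succ r ih =>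
    intro s hs m hle hsum
    rw [Fin.sum_univ_succ] at hsum
    rw [Fin.prod_univ_succ]
    set t := m 0 with ht
    set s' := ∑ i : Fin r, m (Fin.succ i) with hs'
    have ht_le : t ≤ n := hle 0
    by_cases hcase : n ≤ s'
    · have htail := ih s' hcase (fun i => m (Fin.succ i)) (fun i => hle _) rfl
      calc Nat.factorial t * ∏ i : Fin r, Nat.factorial (m (Fin.succ i))
          ≤ n ^ t * (Nat.factorial n * n ^ (s' - n)) :=
            Nat.mul_le_mul (fact_le_pow ht_le) htail
        _ = Nat.factorial n * (n ^ t * n ^ (s' - n)) := by ring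
        _ = Nat.factorial n * n ^ (s - n) := by
            rw [← pow_add]
            have : t + (s' - n) = s - n := by omega
            rw [this]
    · push_neg at hcase
      have htail : (∏ i : Fin r, Nat.factorial (m (Fin.succ i))) ≤ Nat.factorial s' := by
        apply Nat.le_of_dvd (Nat.factorial_pos _)
        exact Nat.prod_factorial_dvd_factorial_sum _ _
      have hts' : n ≤ t + s' := by omega
      have hmerge := merge_fact ht_le (le_of_lt hcase) hts'
      calc Nat.factorial t * ∏ i : Fin r, Nat.factorial (m (Fin.succ i))
          ≤ Nat.factorial t * Nat.factorial s' := Nat.mul_le_mul_left _ htail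
        _ ≤ Nat.factorial n * Nat.factorial (t + s' - n) := hmerge
        _ ≤ Nat.factorial n * n ^ (t + s' - n) :=
            Nat.mul_le_mul_left _ (fact_le_pow (by omega))
        _ = Nat.factorial n * n ^ (s - n) := by
            have : t + s' - n = s - n := by omega
            rw [this]

theorem stmt_2 (n r s : ℕ) (hn : 1 ≤ n) (hr : 1 ≤ r) (hs : n ≤ s) :
    ∀ m : Fin r → ℕ, (∀ i, m i ≤ n) → (∑ i, m i = s) →
      ∏ i, Nat.factorial (m i) ≤ Nat.factorial n * n ^ (s - n) := by
  intro m h1 h2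
  exact aux n hn r s hs m h1 h2
end

section
/- Let n be a natural number and let x be a real number with 0 ≤ x and (n+1)·x ≤ 1/2. Then the series Σ_{l=0}^{∞} ( (n+1+l)! / ( n! · (l+2)! ) ) · x^l converges and its sum is at most n+1. -/
open Nat

/-- `(n + k).choose k = ∏_{i ≤ k} (n + i) / i` and every factor is at most `n + 1`. -/
theorem Nat.factorial_add_le_mul_pow (n k : ℕ) : (n + k)! ≤ n ! * k ! * (n + 1) ^ k := by
  induction k with
  | zero => simp
  | succ k ih =>
    calc (n + (k + 1))! = (n + k + 1) * (n + k)! := factorial_succ _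
      _ ≤ ((k + 1) * (n + 1)) * (n ! * k ! * (n + 1) ^ k) :=
          Nat.mul_le_mul (by nlinarith) ih
      _ = n ! * (k + 1)! * (n + 1) ^ (k + 1) := by rw [factorial_succ]; ring

theorem factorial_add_succ_div_le (n l : ℕ) :
    ((n + 1 + l)! : ℝ) / (n ! * (l + 2)!) ≤ (n + 1) ^ (l + 1) / 2 := by
  have h : 2 * (n + 1 + l)! ≤ n ! * (l + 2)! * (n + 1) ^ (l + 1) :=
    calc 2 * (n + 1 + l)! = 2 * (n + (l + 1))! := by rw [Nat.add_right_comm, Nat.add_assoc]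
      _ ≤ (l + 2) * (n ! * (l + 1)! * (n + 1) ^ (l + 1)) :=
          Nat.mul_le_mul (by omega) (Nat.factorial_add_le_mul_pow n (l + 1))
      _ = n ! * (l + 2)! * (n + 1) ^ (l + 1) := by rw [factorial_succ (l + 1)]; ring
  replace h : (2 * (n + 1 + l)! : ℝ) ≤ n ! * (l + 2)! * (n + 1) ^ (l + 1) := by exact_mod_cast h
  rw [div_le_div_iff₀ (by positivity) two_pos]
  linarith

theorem stmt_7 (n : ℕ) (x : ℝ) (hx : 0 ≤ x) (hnx : (n + 1 : ℝ) * x ≤ 1 / 2) :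
    Summable (fun l : ℕ =>
      (Nat.factorial (n + 1 + l) : ℝ) /
        ((Nat.factorial n : ℝ) * (Nat.factorial (l + 2) : ℝ)) * x ^ l) ∧
    (∑' l : ℕ,
      (Nat.factorial (n + 1 + l) : ℝ) /
        ((Nat.factorial n : ℝ) * (Nat.factorial (l + 2) : ℝ)) * x ^ l) ≤ n + 1 := by
  set f : ℕ → ℝ := fun l => ((n + 1 + l)! : ℝ) / (n ! * (l + 2)!) * x ^ l
  set g : ℕ → ℝ := fun l => (n + 1) / 2 * (1 / 2) ^ l
  have hf_nonneg (l : ℕ) : 0 ≤ f l := by positivity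
  have hf_le_g (l : ℕ) : f l ≤ g l :=
    calc f l ≤ (n + 1) ^ (l + 1) / 2 * x ^ l :=
          mul_le_mul_of_nonneg_right (factorial_add_succ_div_le n l) (by positivity)
      _ = (n + 1) / 2 * ((n + 1) * x) ^ l := by rw [mul_pow, pow_succ]; ring
      _ ≤ (n + 1) / 2 * (1 / 2) ^ l := by gcongr
  have hg : HasSum g ((n + 1) / 2 * (1 - 1 / 2)⁻¹) :=
    (hasSum_geometric_of_lt_one (by norm_num) (by norm_num)).mul_left _
  have hf : Summable f := .of_nonneg_of_le hf_nonneg hf_le_g hg.summable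
  refine ⟨hf, ?_⟩
  calc ∑' l, f l ≤ ∑' l, g l := hf.tsum_le_tsum hf_le_g hg.summable
    _ = n + 1 := by rw [hg.tsum_eq]; ring
end

section
/- Let n and l be natural numbers with n ≥ 1 and l ≥ n+2. Then Σ_{r=l−n+1}^{l} (l−1)!/(r−1)! ≤ (3/2) · (l−1)!/(l−n)!. -/
lemma fact_pow_le (m d : ℕ) (hm : 2 ≤ m) :
    m.factorial * 3 ^ d ≤ (m + d).factorial := by
  induction d with
  | zero => simp
  | succ d ih =>
      have h1 : (m + (d + 1)).factorial = (m + d + 1) * (m + d).factorial := by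
        rw [show m + (d + 1) = (m + d) + 1 by ring, Nat.factorial_succ]
      rw [h1, pow_succ, ← mul_assoc, mul_comm (m.factorial * 3 ^ d) 3]
      exact Nat.mul_le_mul (by omega) ih

lemma geo_bound (N : ℕ) : (∑ i ∈ Finset.range N, ((1:ℝ)/3) ^ i) ≤ 3/2 := by
  rw [geom_sum_eq (by norm_num : (1:ℝ)/3 ≠ 1)]
  have h1 : (0:ℝ) ≤ ((1:ℝ)/3) ^ N := by positivity
  rw [div_le_iff_of_neg (by norm_num : (1:ℝ)/3 - 1 < 0)]
  nlinarith

theorem stmt_8 (n l : ℕ) (hn : 1 ≤ n) (hl : n + 2 ≤ l) :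
    (∑ r ∈ Finset.Icc (l - n + 1) l,
        (Nat.factorial (l - 1) : ℝ) / (Nat.factorial (r - 1) : ℝ))
      ≤ (3 / 2 : ℝ) * (Nat.factorial (l - 1) : ℝ) / (Nat.factorial (l - n) : ℝ) := by
  set m := l - n with hm
  have hm2 : 2 ≤ m := by omega
  have hml : m + 1 ≤ l := by omega
  have hC : (0:ℝ) ≤ (Nat.factorial (l-1) : ℝ) / (Nat.factorial m : ℝ) := by positivity
  have step : (∑ r ∈ Finset.Icc (m + 1) l,
        (Nat.factorial (l - 1) : ℝ) / (Nat.factorial (r - 1) : ℝ))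
      ≤ (Nat.factorial (l-1) : ℝ) / (Nat.factorial m : ℝ) *
        ∑ r ∈ Finset.Icc (m + 1) l, ((1:ℝ)/3) ^ (r - (m+1)) := by
    rw [Finset.mul_sum]
    apply Finset.sum_le_sum
    intro r hr
    rw [Finset.mem_Icc] at hr
    have hnat : Nat.factorial m * 3 ^ (r - (m+1)) ≤ Nat.factorial (r - 1) := by
      have := fact_pow_le m (r - (m+1)) hm2
      have : m + (r - (m+1)) = r - 1 := by omega
      rw [← this]
      exact fact_pow_le m (r - (m+1)) hm2
    have hpos : (0:ℝ) < (Nat.factorial m : ℝ) * 3 ^ (r - (m+1)) := by positivity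
    have hcast : (Nat.factorial m : ℝ) * 3 ^ (r - (m+1)) ≤ (Nat.factorial (r-1) : ℝ) := by
      exact_mod_cast hnat
    have h1 : (Nat.factorial (l - 1) : ℝ) / (Nat.factorial (r - 1) : ℝ)
        ≤ (Nat.factorial (l - 1) : ℝ) / ((Nat.factorial m : ℝ) * 3 ^ (r - (m+1))) :=
      div_le_div_of_nonneg_left (by positivity) hpos hcast
    refine h1.trans_eq ?_
    rw [div_mul_eq_mul_div, div_pow, one_pow, mul_one_div, div_div, mul_comm]
  have geo : (∑ r ∈ Finset.Icc (m + 1) l, ((1:ℝ)/3) ^ (r - (m+1))) ≤ 3/2 := by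
    have heq : (∑ r ∈ Finset.Icc (m + 1) l, ((1:ℝ)/3) ^ (r - (m+1)))
        = ∑ i ∈ Finset.range (l - m), ((1:ℝ)/3) ^ i := by
      refine Finset.sum_nbij' (fun r => r - (m+1)) (fun i => m+1+i) ?_ ?_ ?_ ?_ ?_ <;>
        intros a ha <;> simp only [Finset.mem_Icc, Finset.mem_range] at * <;>
        first | omega | (congr 1; omega)
    rw [heq]
    exact geo_bound _
  calc (∑ r ∈ Finset.Icc (m + 1) l,
        (Nat.factorial (l - 1) : ℝ) / (Nat.factorial (r - 1) : ℝ))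
      ≤ (Nat.factorial (l-1) : ℝ) / (Nat.factorial m : ℝ) *
        ∑ r ∈ Finset.Icc (m + 1) l, ((1:ℝ)/3) ^ (r - (m+1)) := step
    _ ≤ (Nat.factorial (l-1) : ℝ) / (Nat.factorial m : ℝ) * (3/2) :=
        mul_le_mul_of_nonneg_left geo hC
    _ = (3 / 2 : ℝ) * (Nat.factorial (l - 1) : ℝ) / (Nat.factorial m : ℝ) := by ring
end

section
/- Let n and l be natural numbers with n ≥ 1 and l ≥ n+2. Then Σ_{r=1}^{l−n} ( (l−1)! / ( (l−r)! (r−1)! ) ) · n! · n^{l−r−n} + Σ_{r=l−n+1}^{l} (l−1)!/(r−1)! ≤ n! · ( n^{−n} (n+1)^{l−1} + (3/2)·(l−1)!/( n! (l−n)! ) ). -/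
/-! The first sum is `n! n^{-n}` times part of the binomial expansion of `(n + 1)^{l-1}`, so
extending it to the full range bounds it. In the second sum, consecutive terms `(l-1)!/(r-1)!`
shrink by a factor of at least `1/3` because `r - 1 ≥ l - n ≥ 2`, so it is dominated by a geometric
series with first term `(l-1)!/(l-n)!` and sum at most `3/2` times that. -/

open Finset Nat

theorem Finset.sum_Icc_eq_sum_range {M : Type*} [AddCommMonoid M] (f : ℕ → M) (a b : ℕ) :
    ∑ r ∈ Icc a b, f r = ∑ j ∈ range (b + 1 - a), f (a + j) := by
  rw [← Ico_add_one_right_eq_Icc, sum_Ico_eq_sum_range]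

theorem sum_range_choose_mul_pow_le {R : Type*} [CommSemiring R] [PartialOrder R]
    [IsOrderedRing R] {x : R} (hx : 0 ≤ x) {m k : ℕ} (hk : k ≤ m + 1) :
    ∑ i ∈ range k, (m.choose i : R) * x ^ (m - i) ≤ (x + 1) ^ m := by
  calc ∑ i ∈ range k, (m.choose i : R) * x ^ (m - i)
      ≤ ∑ i ∈ range (m + 1), (m.choose i : R) * x ^ (m - i) :=
        sum_le_sum_of_subset_of_nonneg (range_subset_range.2 hk) fun _ _ _ => by positivity
    _ = (x + 1) ^ m := by
        rw [add_comm x 1, add_pow]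
        exact sum_congr rfl fun i _ => by rw [one_pow, one_mul, mul_comm]

theorem factorial_mul_three_pow_le_factorial {a : ℕ} (ha : 2 ≤ a) (j : ℕ) :
    a ! * 3 ^ j ≤ (a + j)! :=
  calc a ! * 3 ^ j ≤ a ! * (a + 1) ^ j := by gcongr; omega
    _ ≤ (a + j)! := factorial_mul_pow_le_factorial

theorem sum_range_inv_factorial_add_le {a : ℕ} (ha : 2 ≤ a) (m : ℕ) :
    ∑ j ∈ range m, ((a + j)! : ℝ)⁻¹ ≤ 3 / 2 * (a ! : ℝ)⁻¹ := by
  have hterm (j : ℕ) : ((a + j)! : ℝ)⁻¹ ≤ (a ! : ℝ)⁻¹ * (1 / 3) ^ j := by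
    rw [one_div, inv_pow, ← mul_inv]
    refine inv_anti₀ (by positivity) ?_
    exact_mod_cast factorial_mul_three_pow_le_factorial ha j
  have hgeom : ∑ j ∈ range m, (1 / 3 : ℝ) ^ j ≤ 3 / 2 := by
    rw [range_eq_Ico]
    exact (geom_sum_Ico_le_of_lt_one (by norm_num) (by norm_num)).trans_eq (by norm_num)
  calc ∑ j ∈ range m, ((a + j)! : ℝ)⁻¹
      ≤ ∑ j ∈ range m, (a ! : ℝ)⁻¹ * (1 / 3) ^ j := sum_le_sum fun j _ => hterm j
    _ = (a ! : ℝ)⁻¹ * ∑ j ∈ range m, (1 / 3 : ℝ) ^ j := (mul_sum ..).symm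
    _ ≤ (a ! : ℝ)⁻¹ * (3 / 2) := by gcongr
    _ = 3 / 2 * (a ! : ℝ)⁻¹ := mul_comm ..

theorem sum_factorial_div_mul_pow_le {n : ℕ} (hn : 1 ≤ n) (l : ℕ) :
    ∑ r ∈ Icc 1 (l - n),
        ((l - 1)! : ℝ) / (((l - r)! : ℝ) * ((r - 1)! : ℝ)) * (n ! : ℝ) * (n : ℝ) ^ (l - r - n)
      ≤ (n ! : ℝ) * ((n : ℝ) ^ (-(n : ℤ)) * (n + 1 : ℝ) ^ (l - 1)) := by
  have hn0 : (n : ℝ) ≠ 0 := by positivity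
  have hterm : ∀ j ∈ range (l - n),
      ((l - 1)! : ℝ) / (((l - (1 + j))! : ℝ) * ((1 + j - 1)! : ℝ)) * (n ! : ℝ) *
          (n : ℝ) ^ (l - (1 + j) - n)
        = (n ! : ℝ) * (n : ℝ) ^ (-(n : ℤ)) * (((l - 1).choose j : ℝ) * (n : ℝ) ^ (l - 1 - j)) := by
    intro j hj
    have hj : j < l - n := mem_range.1 hj
    rw [cast_choose ℝ (by omega : j ≤ l - 1), zpow_neg, zpow_natCast,
      show l - 1 - j = l - (1 + j) - n + n by omega, pow_add,
      show l - (1 + j) - n + n = l - (1 + j) by omega, show 1 + j - 1 = j by omega]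
    field_simp
  rw [sum_Icc_eq_sum_range, Nat.add_sub_cancel, sum_congr rfl hterm, ← mul_sum, ← mul_assoc]
  exact mul_le_mul_of_nonneg_left (sum_range_choose_mul_pow_le (by positivity) (by omega))
    (by positivity)

theorem sum_factorial_div_factorial_le {n l : ℕ} (hl : n + 2 ≤ l) :
    ∑ r ∈ Icc (l - n + 1) l, ((l - 1)! : ℝ) / ((r - 1)! : ℝ)
      ≤ 3 / 2 * ((l - 1)! : ℝ) / ((l - n)! : ℝ) := by
  rw [sum_Icc_eq_sum_range, show l + 1 - (l - n + 1) = n by omega]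
  simp only [show ∀ j, l - n + 1 + j - 1 = l - n + j by omega, div_eq_mul_inv, ← mul_sum]
  calc ((l - 1)! : ℝ) * ∑ j ∈ range n, ((l - n + j)! : ℝ)⁻¹
      ≤ ((l - 1)! : ℝ) * (3 / 2 * ((l - n)! : ℝ)⁻¹) := by
        gcongr
        exact sum_range_inv_factorial_add_le (by omega) n
    _ = 3 / 2 * ((l - 1)! : ℝ) * ((l - n)! : ℝ)⁻¹ := by ring

theorem stmt_9 (n l : ℕ) (hn : 1 ≤ n) (hl : n + 2 ≤ l) :
    (∑ r ∈ Finset.Icc 1 (l - n),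
        (Nat.factorial (l - 1) : ℝ) /
          ((Nat.factorial (l - r) : ℝ) * (Nat.factorial (r - 1) : ℝ)) *
          (Nat.factorial n : ℝ) * (n : ℝ) ^ (l - r - n))
      + (∑ r ∈ Finset.Icc (l - n + 1) l,
          (Nat.factorial (l - 1) : ℝ) / (Nat.factorial (r - 1) : ℝ))
      ≤ (Nat.factorial n : ℝ) *
          ((n : ℝ) ^ (-(n : ℤ)) * (n + 1 : ℝ) ^ (l - 1) +
            (3 / 2 : ℝ) * (Nat.factorial (l - 1) : ℝ) /
              ((Nat.factorial n : ℝ) * (Nat.factorial (l - n) : ℝ))) := by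
  have hfac : (n ! : ℝ) ≠ 0 := by positivity
  calc _ ≤ (n ! : ℝ) * ((n : ℝ) ^ (-(n : ℤ)) * (n + 1 : ℝ) ^ (l - 1))
          + 3 / 2 * ((l - 1)! : ℝ) / ((l - n)! : ℝ) :=
        add_le_add (sum_factorial_div_mul_pow_le hn l) (sum_factorial_div_factorial_le hl)
    _ = _ := by field_simp
end

section
/- Let n be a natural number with n ≥ 1 and let x be a real number with 0 < x and (n+1)·x ≤ 1/2. Then the series Σ_{l=n+2}^{∞} x^l · n! · ( n^{−n} (n+1)^{l−1} + (3/2)·(l−1)! / ( n! (l−n)! ) ) converges and its sum is at most (2e + 3/2) · (n+1)! · x^{n+2}, where e is Euler's number. -/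
/-!
Writing `q = (n + 1) x ≤ 1/2`, the `l`-th term of the shifted series is at most
`(e + 3/4) (n + 1)! x^(n+2) q^l`: in the first summand `(1 + 1/n)^n ≤ e` absorbs
`n^(-n) (n + 1)^n`, and in the second `(n + 1 + l)! / (l + 2)! ≤ (n + 1)! (n + 1)^l / 2`,
since each step in `l` multiplies the left side by `(n + 2 + l) / (l + 3) ≤ n + 1`.
Summing the geometric series `∑ q^l ≤ 2` gives the bound.
-/

open Nat Real

theorem two_mul_factorial_add_le (n l : ℕ) :
    2 * (n + 1 + l)! ≤ (n + 1)! * (n + 1) ^ l * (l + 2)! := by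
  induction l with
  | zero => simp [Nat.factorial_succ]; omega
  | succ l ih =>
    have hstep : n + 2 + l ≤ (n + 1) * (l + 3) := by nlinarith
    calc 2 * (n + 1 + (l + 1))! = (n + 2 + l) * (2 * (n + 1 + l)!) := by
          rw [show n + 1 + (l + 1) = (n + 1 + l) + 1 by omega, Nat.factorial_succ]; ring
      _ ≤ (n + 1) * (l + 3) * ((n + 1)! * (n + 1) ^ l * (l + 2)!) := by gcongr
      _ = (n + 1)! * (n + 1) ^ (l + 1) * (l + 1 + 2)! := by
          rw [show l + 1 + 2 = (l + 2) + 1 by omega, Nat.factorial_succ (l + 2)]; ring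

theorem add_one_pow_le_exp_one_mul_pow (n : ℕ) : ((n : ℝ) + 1) ^ n ≤ exp 1 * (n : ℝ) ^ n := by
  rcases n.eq_zero_or_pos with rfl | hn
  · simp
  · have hn' : (n : ℝ) ≠ 0 := by positivity
    calc ((n : ℝ) + 1) ^ n = (1 + (n : ℝ)⁻¹) ^ n * (n : ℝ) ^ n := by
          rw [← mul_pow]; field_simp
      _ ≤ exp 1 * (n : ℝ) ^ n := by gcongr; exact one_add_inv_pow_le_exp

theorem factorial_mul_add_one_pow_div_pow_le (n : ℕ) :
    (n ! : ℝ) * ((n : ℝ) ^ n)⁻¹ * ((n : ℝ) + 1) ^ (n + 1) ≤ exp 1 * ((n + 1)! : ℝ) := by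
  have hpow : (0 : ℝ) < (n : ℝ) ^ n := by
    rcases n.eq_zero_or_pos with rfl | hn
    · simp
    · positivity
  calc (n ! : ℝ) * ((n : ℝ) ^ n)⁻¹ * ((n : ℝ) + 1) ^ (n + 1)
      = ((n + 1)! : ℝ) * (((n : ℝ) + 1) ^ n / (n : ℝ) ^ n) := by
        push_cast [Nat.factorial_succ]; ring
    _ ≤ ((n + 1)! : ℝ) * exp 1 := by
        gcongr
        rw [div_le_iff₀ hpow]
        exact add_one_pow_le_exp_one_mul_pow n
    _ = exp 1 * ((n + 1)! : ℝ) := mul_comm _ _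

theorem summable_and_tsum_le_of_le_geometric {f : ℕ → ℝ} {c q : ℝ} (hf : ∀ l, 0 ≤ f l)
    (hq₀ : 0 ≤ q) (hq₁ : q < 1) (hfq : ∀ l, f l ≤ c * q ^ l) :
    Summable f ∧ ∑' l, f l ≤ c * (1 - q)⁻¹ := by
  have hg : Summable fun l => c * q ^ l := (summable_geometric_of_lt_one hq₀ hq₁).mul_left c
  have hs : Summable f := hg.of_nonneg_of_le hf hfq
  refine ⟨hs, ?_⟩
  calc ∑' l, f l ≤ ∑' l, c * q ^ l := hs.tsum_le_tsum hfq hg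
    _ = c * (1 - q)⁻¹ := by rw [tsum_mul_left, tsum_geometric_of_lt_one hq₀ hq₁]

/-- The `l`-th term of the series, counted from its first index `n + 2`. -/
noncomputable def tailTerm (n : ℕ) (x : ℝ) (l : ℕ) : ℝ :=
  x ^ (n + 2 + l) * (n ! : ℝ) *
    ((n : ℝ) ^ (-(n : ℤ)) * (n + 1 : ℝ) ^ (n + 2 + l - 1) +
      (3 / 2 : ℝ) * ((n + 2 + l - 1)! : ℝ) / ((n ! : ℝ) * ((n + 2 + l - n)! : ℝ)))

theorem tailTerm_eq (n : ℕ) (x : ℝ) (l : ℕ) :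
    tailTerm n x l =
      x ^ (n + 2) * ((n ! : ℝ) * ((n : ℝ) ^ n)⁻¹ * ((n : ℝ) + 1) ^ (n + 1)) * ((n + 1) * x) ^ l +
        3 / 2 * x ^ (n + 2) * x ^ l * (((n + 1 + l)! : ℝ) / ((l + 2)! : ℝ)) := by
  have hfac : (n ! : ℝ) ≠ 0 := by positivity
  rw [tailTerm, show n + 2 + l - 1 = n + 1 + l by omega, show n + 2 + l - n = l + 2 by omega,
    zpow_neg, zpow_natCast, mul_pow]
  field_simp
  ring

theorem tailTerm_nonneg (n : ℕ) {x : ℝ} (hx : 0 ≤ x) (l : ℕ) : 0 ≤ tailTerm n x l := by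
  unfold tailTerm
  positivity

theorem tailTerm_le (n : ℕ) {x : ℝ} (hx : 0 ≤ x) (l : ℕ) :
    tailTerm n x l ≤ (exp 1 + 3 / 4) * (n + 1)! * x ^ (n + 2) * ((n + 1) * x) ^ l := by
  have hfac : ((n + 1 + l)! : ℝ) / ((l + 2)! : ℝ) ≤ (n + 1)! * (n + 1) ^ l / 2 := by
    rw [div_le_div_iff₀ (by positivity) two_pos]
    exact_mod_cast (mul_comm _ _).trans_le (two_mul_factorial_add_le n l)
  have hA := factorial_mul_add_one_pow_div_pow_le n
  rw [tailTerm_eq]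
  calc _ ≤ x ^ (n + 2) * (exp 1 * (n + 1)!) * ((n + 1) * x) ^ l +
        3 / 2 * x ^ (n + 2) * x ^ l * ((n + 1)! * (n + 1) ^ l / 2) := by gcongr
    _ = _ := by rw [mul_pow]; ring

theorem stmt_10_general (n : ℕ) (x : ℝ) (hx : 0 < x)
    (hnx : (n + 1 : ℝ) * x ≤ 1 / 2) :
    Summable (fun l : ℕ =>
      x ^ (n + 2 + l) * (Nat.factorial n : ℝ) *
        ((n : ℝ) ^ (-(n : ℤ)) * (n + 1 : ℝ) ^ (n + 2 + l - 1) +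
          (3 / 2 : ℝ) * (Nat.factorial (n + 2 + l - 1) : ℝ) /
            ((Nat.factorial n : ℝ) * (Nat.factorial (n + 2 + l - n) : ℝ)))) ∧
    (∑' l : ℕ,
      x ^ (n + 2 + l) * (Nat.factorial n : ℝ) *
        ((n : ℝ) ^ (-(n : ℤ)) * (n + 1 : ℝ) ^ (n + 2 + l - 1) +
          (3 / 2 : ℝ) * (Nat.factorial (n + 2 + l - 1) : ℝ) /
            ((Nat.factorial n : ℝ) * (Nat.factorial (n + 2 + l - n) : ℝ))))
      ≤ (2 * Real.exp 1 + 3 / 2) * (Nat.factorial (n + 1) : ℝ) * x ^ (n + 2) := by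
  change Summable (tailTerm n x) ∧ ∑' l, tailTerm n x l ≤ _
  obtain ⟨hs, hle⟩ := summable_and_tsum_le_of_le_geometric (tailTerm_nonneg n hx.le)
    (by positivity) (by linarith) (tailTerm_le n hx.le)
  refine ⟨hs, hle.trans ?_⟩
  have hC : 0 ≤ (exp 1 + 3 / 4) * ((n + 1)! : ℝ) * x ^ (n + 2) := by positivity
  have hinv : (1 - (n + 1 : ℝ) * x)⁻¹ ≤ 2 := by
    rw [inv_le_comm₀ (by linarith) two_pos]; linarith
  calc _ ≤ (exp 1 + 3 / 4) * ((n + 1)! : ℝ) * x ^ (n + 2) * 2 := by gcongr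
    _ = _ := by ring

theorem stmt_10 (n : ℕ) (hn : 1 ≤ n) (x : ℝ) (hx : 0 < x)
    (hnx : (n + 1 : ℝ) * x ≤ 1 / 2) :
    Summable (fun l : ℕ =>
      x ^ (n + 2 + l) * (Nat.factorial n : ℝ) *
        ((n : ℝ) ^ (-(n : ℤ)) * (n + 1 : ℝ) ^ (n + 2 + l - 1) +
          (3 / 2 : ℝ) * (Nat.factorial (n + 2 + l - 1) : ℝ) /
            ((Nat.factorial n : ℝ) * (Nat.factorial (n + 2 + l - n) : ℝ)))) ∧
    (∑' l : ℕ,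
      x ^ (n + 2 + l) * (Nat.factorial n : ℝ) *
        ((n : ℝ) ^ (-(n : ℤ)) * (n + 1 : ℝ) ^ (n + 2 + l - 1) +
          (3 / 2 : ℝ) * (Nat.factorial (n + 2 + l - 1) : ℝ) /
            ((Nat.factorial n : ℝ) * (Nat.factorial (n + 2 + l - n) : ℝ))))
      ≤ (2 * Real.exp 1 + 3 / 2) * (Nat.factorial (n + 1) : ℝ) * x ^ (n + 2) :=
  stmt_10_general n x hx hnx
end
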